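/- arXiv:1011.1775 — 4 statements merged into one kernel-verified Lean document; each statement's English description precedes it below -/
import Mathlib

section
/- Let A be a continuous matrix-valued function on an interval I containing t₀ such that A(t) · A(s) = A(s) · A(t) for all t, s ∈ I. Then the iterated Peano–Baker integrals satisfy I_n(t) = (1/n!) · (∫_{t₀}^t A(τ) dτ)^n for all t ∈ I and all n ≥ 0. -/
attribute [local instance] Matrix.normedAddCommGroup Matrix.normedSpace

/-- The iterated Peano–Baker integrals: `pbIter A t₀ 0 = 1` (identity matrix) and
`pbIter A t₀ (n+1) t = ∫_{t₀}^t A τ * pbIter A t₀ n τ dτ`. -/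
noncomputable def pbIter {d : ℕ} (A : ℝ → Matrix (Fin d) (Fin d) ℝ) (t₀ : ℝ) :
    ℕ → ℝ → Matrix (Fin d) (Fin d) ℝ
  | 0 => fun _ => 1
  | n + 1 => fun t => ∫ τ in t₀..t, A τ * pbIter A t₀ n τ

/-! With `B t = ∫ τ in t₀..t, A τ`, each `A t` commutes with `B t` because it commutes with every
value of `A` it is integrated against. Hence `B ^ (n + 1)` has derivative `(n + 1) • A * B ^ n`
despite noncommutativity, and by the fundamental theorem of calculus the recursion
`I (n + 1) t = ∫ τ in t₀..t, A τ * B τ ^ n / n!` integrates to `B t ^ (n + 1) / (n + 1)!`. -/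

open Set intervalIntegral

namespace Matrix
variable {m : Type*} [Fintype m]

/- Instance search does not derive these from `Matrix.normedAddCommGroup`, whose topology agrees
with the product topology on `Matrix m m ℝ` only after unfolding. -/
@[reducible] noncomputable def instENormedAddMonoidReal : ENormedAddMonoid (Matrix m m ℝ) :=
  inferInstanceAs (ENormedAddMonoid (m → m → ℝ))

theorem instPseudoMetrizableSpaceReal :
    TopologicalSpace.PseudoMetrizableSpace (Matrix m m ℝ) :=
  inferInstanceAs (TopologicalSpace.PseudoMetrizableSpace (m → m → ℝ))

attribute [local instance] instENormedAddMonoidReal instPseudoMetrizableSpaceReal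

variable [DecidableEq m]

/- The sup norm is not submultiplicative, so `HasDerivAt.mul` does not apply; matrix multiplication
is a continuous bilinear map all the same. -/
theorem hasDerivAt_mul {f g : ℝ → Matrix m m ℝ} {f' g' : Matrix m m ℝ} {x : ℝ}
    (hf : HasDerivAt f f' x) (hg : HasDerivAt g g' x) :
    HasDerivAt (fun s => f s * g s) (f' * g x + f x * g') x := by
  let L : Matrix m m ℝ →L[ℝ] Matrix m m ℝ →L[ℝ] Matrix m m ℝ :=
    (LinearMap.toContinuousLinearMap.toLinearMap ∘ₗ LinearMap.mul ℝ _).toContinuousLinearMap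
  rw [add_comm]
  exact L.hasDerivAt_of_bilinear (fun _ => hf) (fun _ => hg)

theorem commute_intervalIntegral {A : ℝ → Matrix m m ℝ} {M : Matrix m m ℝ} {a b : ℝ}
    (hA : IntervalIntegrable A MeasureTheory.volume a b) (hM : ∀ τ ∈ uIcc a b, Commute M (A τ)) :
    Commute M (∫ τ in a..b, A τ) := by
  calc M * ∫ τ in a..b, A τ
      = ∫ τ in a..b, M * A τ :=
        ((LinearMap.mulLeft ℝ M).toContinuousLinearMap.intervalIntegral_comp_comm hA).symm
    _ = ∫ τ in a..b, A τ * M := integral_congr fun τ hτ => hM τ hτ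
    _ = (∫ τ in a..b, A τ) * M :=
        (LinearMap.mulRight ℝ M).toContinuousLinearMap.intervalIntegral_comp_comm hA

theorem hasDerivAt_pow_succ {B : ℝ → Matrix m m ℝ} {b : Matrix m m ℝ} {x : ℝ}
    (hB : HasDerivAt B b x) (hb : Commute b (B x)) (n : ℕ) :
    HasDerivAt (fun s => B s ^ (n + 1)) ((n + 1 : ℝ) • (b * B x ^ n)) x := by
  induction n with
  | zero => simpa using hB
  | succ n ih =>
    have h := hasDerivAt_mul ih hB
    simp only [pow_succ _ (n + 1)]
    convert h using 1
    rw [smul_mul_assoc, mul_assoc, ← pow_succ, ← (hb.pow_right (n + 1)).eq]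
    push_cast
    rw [add_smul, one_smul]

theorem integral_mul_primitive_pow {A : ℝ → Matrix m m ℝ} {a b : ℝ}
    (hA : ContinuousOn A (uIcc a b))
    (hcomm : ∀ s ∈ uIcc a b, ∀ t ∈ uIcc a b, Commute (A s) (A t)) (n : ℕ) :
    ∫ τ in a..b, A τ * (∫ σ in a..τ, A σ) ^ n =
      ((n : ℝ) + 1)⁻¹ • (∫ τ in a..b, A τ) ^ (n + 1) := by
  set B : ℝ → Matrix m m ℝ := fun t => ∫ σ in a..t, A σ
  have hB : ContinuousOn B (uIcc a b) :=
    continuousOn_primitive_interval' hA.intervalIntegrable left_mem_uIcc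
  have hderiv : ∀ x ∈ Ioo (min a b) (max a b),
      HasDerivAt (fun s => ((n : ℝ) + 1)⁻¹ • B s ^ (n + 1)) (A x * B x ^ n) x := by
    intro x hx
    have hxab : x ∈ uIcc a b := Ioo_subset_Icc_self hx
    have hBx : HasDerivAt B (A x) x :=
      integral_hasDerivAt_right (hA.mono (uIcc_subset_uIcc_left hxab)).intervalIntegrable
        ((hA.mono Ioo_subset_Icc_self).stronglyMeasurableAtFilter isOpen_Ioo x hx)
        (hA.continuousAt (Icc_mem_nhds hx.1 hx.2))
    have hABx : Commute (A x) (B x) :=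
      commute_intervalIntegral (hA.mono (uIcc_subset_uIcc_left hxab)).intervalIntegrable
        fun τ hτ => hcomm x hxab τ (uIcc_subset_uIcc_left hxab hτ)
    have h := (hasDerivAt_pow_succ hBx hABx n).const_smul ((n : ℝ) + 1)⁻¹
    rwa [smul_smul, inv_mul_cancel₀ n.cast_add_one_ne_zero, one_smul] at h
  have hint : IntervalIntegrable (fun τ => A τ * B τ ^ n) MeasureTheory.volume a b :=
    (hA.mul (hB.pow n)).intervalIntegrable
  rw [integral_eq_sub_of_hasDeriv_right (f := fun s => ((n : ℝ) + 1)⁻¹ • B s ^ (n + 1))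
    ((hB.pow (n + 1)).const_smul ((n : ℝ) + 1)⁻¹)
    (fun x hx => (hderiv x hx).hasDerivWithinAt) hint]
  simp [B]

end Matrix

theorem stmt2_general {d : ℕ} (A : ℝ → Matrix (Fin d) (Fin d) ℝ)
    (I : Set ℝ) (hI : I.OrdConnected) (t₀ : ℝ) (ht₀ : t₀ ∈ I)
    (hA : ContinuousOn A I)
    (hcomm : ∀ t ∈ I, ∀ s ∈ I, A t * A s = A s * A t) :
    ∀ n : ℕ, ∀ t ∈ I,
      pbIter A t₀ n t = ((n.factorial : ℝ))⁻¹ • (∫ τ in t₀..t, A τ) ^ n := by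
  intro n
  induction n with
  | zero => simp [pbIter]
  | succ n ih =>
    intro t ht
    have hsub : uIcc t₀ t ⊆ I := hI.uIcc_subset ht₀ ht
    calc pbIter A t₀ (n + 1) t
        = ∫ τ in t₀..t, (n.factorial : ℝ)⁻¹ • (A τ * (∫ σ in t₀..τ, A σ) ^ n) :=
          integral_congr fun τ hτ => by rw [ih τ (hsub hτ), mul_smul_comm]
      _ = (n.factorial : ℝ)⁻¹ • (((n : ℝ) + 1)⁻¹ • (∫ τ in t₀..t, A τ) ^ (n + 1)) := by
          rw [integral_smul, Matrix.integral_mul_primitive_pow (hA.mono hsub)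
            fun s hs r hr => hcomm s (hsub hs) r (hsub hr)]
      _ = ((n + 1).factorial : ℝ)⁻¹ • (∫ τ in t₀..t, A τ) ^ (n + 1) := by
          rw [smul_smul, Nat.factorial_succ, Nat.cast_mul, Nat.cast_succ, mul_inv, mul_comm]

theorem stmt2 {d : ℕ} (hd : 1 ≤ d) (A : ℝ → Matrix (Fin d) (Fin d) ℝ)
    (I : Set ℝ) (hI : I.OrdConnected) (t₀ : ℝ) (ht₀ : t₀ ∈ I)
    (hA : ContinuousOn A I)
    (hcomm : ∀ t ∈ I, ∀ s ∈ I, A t * A s = A s * A t) :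
    ∀ n : ℕ, ∀ t ∈ I,
      pbIter A t₀ n t = ((n.factorial : ℝ))⁻¹ • (∫ τ in t₀..t, A τ) ^ n :=
  stmt2_general A I hI t₀ ht₀ hA hcomm
end

section
/- Let A be a continuous matrix-valued function on an interval I containing t₀ such that, for every t ∈ I, the matrix A(t) commutes with the integral ∫_{t₀}^t A(τ) dτ. Then the iterated Peano–Baker integrals satisfy I_n(t) = (1/n!) · (∫_{t₀}^t A(τ) dτ)^n for all t ∈ I and all n ≥ 0. -/
attribute [local instance] Matrix.normedAddCommGroup Matrix.normedSpace

/-!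
With `B t = ∫_{t₀}^t A`, the commutation hypothesis makes `B ^ (n + 1)` differentiate like a
scalar power: `(B ^ (n + 1))' = (n + 1) • A * B ^ n`. Hence
`∫_{t₀}^t A * B ^ n = B t ^ (n + 1) / (n + 1)`, and induction on `n` turns
`I_{n+1} = ∫ A * I_n = ∫ A * B ^ n / n!` into `B ^ (n + 1) / (n + 1)!`.
-/

open MeasureTheory Set intervalIntegral

namespace Matrix

variable {𝕜 ι : Type*} [NontriviallyNormedField 𝕜] [CompleteSpace 𝕜] [Fintype ι] [DecidableEq ι]

-- The sup norm on matrices is not submultiplicative (there is no `NormedRing` instance), so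
-- continuity comes from finite dimensionality rather than from `ContinuousLinearMap.mul`.
noncomputable def mulCLM : Matrix ι ι 𝕜 →L[𝕜] Matrix ι ι 𝕜 →L[𝕜] Matrix ι ι 𝕜 :=
  LinearMap.toContinuousLinearMap <|
    LinearMap.toContinuousLinearMap.toLinearMap.comp (LinearMap.mul 𝕜 (Matrix ι ι 𝕜))

@[simp]
theorem mulCLM_apply (M N : Matrix ι ι 𝕜) : mulCLM M N = M * N := rfl

end Matrix

section MatrixDeriv

variable {𝕜 ι : Type*} [NontriviallyNormedField 𝕜] [CompleteSpace 𝕜] [Fintype ι] [DecidableEq ι]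
  {f g : 𝕜 → Matrix ι ι 𝕜} {f' g' : Matrix ι ι 𝕜} {s : Set 𝕜} {x : 𝕜}

theorem HasDerivWithinAt.matrix_mul (hf : HasDerivWithinAt f f' s x)
    (hg : HasDerivWithinAt g g' s x) :
    HasDerivWithinAt (fun y => f y * g y) (f' * g x + f x * g') s x := by
  have h := Matrix.mulCLM.hasDerivWithinAt_of_bilinear hf hg
  rwa [add_comm] at h

theorem HasDerivWithinAt.matrix_pow_succ (hf : HasDerivWithinAt f f' s x)
    (hcomm : Commute f' (f x)) (n : ℕ) :
    HasDerivWithinAt (fun y => f y ^ (n + 1)) ((n + 1) • (f' * f x ^ n)) s x := by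
  induction n with
  | zero => simpa using hf
  | succ n ih =>
    have key : f' * f x ^ (n + 1) + f x * ((n + 1) • (f' * f x ^ n))
        = (n + 2) • (f' * f x ^ (n + 1)) := by
      rw [mul_smul_comm, ← mul_assoc, ← hcomm.eq, mul_assoc, ← pow_succ', succ_nsmul' _ (n + 1)]
    simpa only [← pow_succ', key] using hf.matrix_mul ih

end MatrixDeriv

section FTC

variable {E : Type*} [NormedAddCommGroup E] [NormedSpace ℝ E] [CompleteSpace E] {a b t : ℝ}

theorem ContinuousOn.hasDerivWithinAt_integral_uIcc {f : ℝ → E}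
    (hf : ContinuousOn f (uIcc a b)) (ht : t ∈ uIcc a b) :
    HasDerivWithinAt (fun u => ∫ x in a..u, f x) (f t) (uIcc a b) t := by
  have : Fact (t ∈ uIcc a b) := ⟨ht⟩
  exact integral_hasDerivWithinAt_right
    ((hf.mono (uIcc_subset_uIcc left_mem_uIcc ht)).intervalIntegrable)
    (hf.stronglyMeasurableAtFilter_nhdsWithin measurableSet_uIcc t) (hf t ht)

theorem intervalIntegral.integral_eq_sub_of_hasDerivWithinAt_uIcc {f f' : ℝ → E}
    (hderiv : ∀ x ∈ uIcc a b, HasDerivWithinAt f (f' x) (uIcc a b) x)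
    (hint : IntervalIntegrable f' volume a b) :
    ∫ y in a..b, f' y = f b - f a :=
  integral_eq_sub_of_hasDeriv_right (fun x hx => (hderiv x hx).continuousWithinAt)
    (fun x hx => ((hderiv x (Ioo_subset_Icc_self hx)).hasDerivAt
      (Icc_mem_nhds hx.1 hx.2)).hasDerivWithinAt) hint

end FTC

theorem intervalIntegral.integral_mul_integral_pow {ι : Type*} [Fintype ι] [DecidableEq ι]
    {A : ℝ → Matrix ι ι ℝ} {a b : ℝ} (hA : ContinuousOn A (uIcc a b))
    (hcomm : ∀ t ∈ uIcc a b, Commute (A t) (∫ τ in a..t, A τ)) (n : ℕ) :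
    ∫ t in a..b, A t * (∫ τ in a..t, A τ) ^ n
      = ((n : ℝ) + 1)⁻¹ • (∫ τ in a..b, A τ) ^ (n + 1) := by
  set B : ℝ → Matrix ι ι ℝ := fun t => ∫ τ in a..t, A τ
  have hB t (ht : t ∈ uIcc a b) := hA.hasDerivWithinAt_integral_uIcc ht
  have hBcont : ContinuousOn B (uIcc a b) := fun t ht => (hB t ht).continuousWithinAt
  have hFTC : ∫ t in a..b, ((n : ℝ) + 1) • (A t * B t ^ n) = B b ^ (n + 1) := by
    rw [integral_eq_sub_of_hasDerivWithinAt_uIcc (f := fun t => B t ^ (n + 1))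
        (f' := fun t => ((n : ℝ) + 1) • (A t * B t ^ n)) (fun t ht => by
          have h := (hB t ht).matrix_pow_succ (hcomm t ht) n
          rwa [← Nat.cast_smul_eq_nsmul ℝ, Nat.cast_succ] at h)
      ((hA.mul (hBcont.pow n)).const_smul ((n : ℝ) + 1)).intervalIntegrable]
    simp [B]
  rw [← hFTC, intervalIntegral.integral_smul, smul_smul, inv_mul_cancel₀ (by positivity), one_smul]

theorem stmt3_general {d : ℕ} (A : ℝ → Matrix (Fin d) (Fin d) ℝ)
    (I : Set ℝ) (hI : I.OrdConnected) (t₀ : ℝ) (ht₀ : t₀ ∈ I)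
    (hA : ContinuousOn A I)
    (hcomm : ∀ t ∈ I, A t * (∫ τ in t₀..t, A τ) = (∫ τ in t₀..t, A τ) * A t) :
    ∀ n : ℕ, ∀ t ∈ I,
      pbIter A t₀ n t = ((n.factorial : ℝ))⁻¹ • (∫ τ in t₀..t, A τ) ^ n := by
  intro n
  induction n with
  | zero => simp [pbIter]
  | succ n ih =>
    intro t ht
    have hsub : uIcc t₀ t ⊆ I := hI.uIcc_subset ht₀ ht
    calc pbIter A t₀ (n + 1) t
        = ∫ τ in t₀..t, (n.factorial : ℝ)⁻¹ • (A τ * (∫ σ in t₀..τ, A σ) ^ n) :=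
          integral_congr fun τ hτ => by simp only [ih τ (hsub hτ), mul_smul_comm]
      _ = ((n + 1).factorial : ℝ)⁻¹ • (∫ τ in t₀..t, A τ) ^ (n + 1) := by
          rw [intervalIntegral.integral_smul,
            integral_mul_integral_pow (hA.mono hsub) (fun τ hτ => hcomm τ (hsub hτ)) n,
            smul_smul, Nat.factorial_succ, Nat.cast_mul, mul_inv, Nat.cast_succ, mul_comm]

theorem stmt3 {d : ℕ} (hd : 1 ≤ d) (A : ℝ → Matrix (Fin d) (Fin d) ℝ)
    (I : Set ℝ) (hI : I.OrdConnected) (t₀ : ℝ) (ht₀ : t₀ ∈ I)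
    (hA : ContinuousOn A I)
    (hcomm : ∀ t ∈ I, A t * (∫ τ in t₀..t, A τ) = (∫ τ in t₀..t, A τ) * A t) :
    ∀ n : ℕ, ∀ t ∈ I,
      pbIter A t₀ n t = ((n.factorial : ℝ))⁻¹ • (∫ τ in t₀..t, A τ) ^ n :=
  stmt3_general A I hI t₀ ht₀ hA hcomm
end

section
/- Let A be a continuous matrix-valued function on an interval I containing t₀, and let Φ_A(t; t₀) denote the sum of the Peano–Baker series. Then Φ_A satisfies the Volterra integral equation Φ_A(t; t₀) = 1 + ∫_{t₀}^t A(τ) · Φ_A(τ; t₀) dτ for all t ∈ I; in particular Φ_A(t₀; t₀) = 1. -/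
attribute [local instance] Matrix.normedAddCommGroup Matrix.normedSpace

/-!
On `[t₀, t]` (or `[t, t₀]`) the coefficient is bounded, `‖A‖ ≤ M`, and an induction gives
`‖I_n(τ)‖ ≤ (d M |τ - t₀|)ⁿ / n!`, the factor `d` coming from the entrywise sup norm, which is
not submultiplicative. The series is therefore dominated by an exponential series, uniformly in
`τ`, so it converges and may be integrated term by term against `A`; since
`I_{n+1} = ∫ A I_n`, shifting the index turns the series into the Volterra equation.
-/

open MeasureTheory intervalIntegral Set
open scoped Nat

theorem Matrix.norm_mul_le_card_mul {l m n α : Type*} [Fintype l] [Fintype m] [Fintype n]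
    [NormedRing α] (A : Matrix l m α) (B : Matrix m n α) :
    ‖A * B‖ ≤ Fintype.card m * ‖A‖ * ‖B‖ := by
  rw [Matrix.norm_le_iff (by positivity)]
  intro i k
  calc ‖(A * B) i k‖ = ‖∑ j, A i j * B j k‖ := rfl
    _ ≤ ∑ j, ‖A i j‖ * ‖B j k‖ :=
        (norm_sum_le _ _).trans (Finset.sum_le_sum fun j _ => norm_mul_le _ _)
    _ ≤ ∑ _j : m, ‖A‖ * ‖B‖ := Finset.sum_le_sum fun j _ =>
        mul_le_mul (Matrix.norm_entry_le_entrywise_sup_norm A)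
          (Matrix.norm_entry_le_entrywise_sup_norm B) (norm_nonneg _) (norm_nonneg _)
    _ = Fintype.card m * ‖A‖ * ‖B‖ := by simp [mul_assoc]

theorem Matrix.norm_one_le_one {n α : Type*} [Fintype n] [DecidableEq n] [NormedRing α]
    [NormOneClass α] : ‖(1 : Matrix n n α)‖ ≤ 1 := by
  rw [← Matrix.diagonal_one, Matrix.norm_diagonal]
  exact (pi_norm_const_le _).trans norm_one.le

section PeanoBaker

variable {d : ℕ} {A : ℝ → Matrix (Fin d) (Fin d) ℝ} {t₀ t : ℝ}

theorem continuousOn_pbIter (hA : ContinuousOn A (uIcc t₀ t)) (n : ℕ) :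
    ContinuousOn (pbIter A t₀ n) (uIcc t₀ t) := by
  induction n with
  | zero => exact continuousOn_const
  | succ n ih =>
    exact continuousOn_primitive_interval' (hA.mul ih).intervalIntegrable left_mem_uIcc

theorem norm_pbIter_le {M : ℝ} (hM : ∀ τ ∈ uIcc t₀ t, ‖A τ‖ ≤ M) (n : ℕ) :
    ∀ τ ∈ uIcc t₀ t, ‖pbIter A t₀ n τ‖ ≤ (d * M) ^ n * |τ - t₀| ^ n / n ! := by
  have hM₀ : 0 ≤ M := (norm_nonneg _).trans (hM t₀ left_mem_uIcc)
  induction n with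
  | zero => intro τ _; simpa [pbIter] using Matrix.norm_one_le_one
  | succ n ih =>
    intro τ hτ
    have hsub : uIoc t₀ τ ⊆ uIcc t₀ t :=
      uIoc_subset_uIcc.trans (uIcc_subset_uIcc left_mem_uIcc hτ)
    have hpoint : ∀ σ ∈ uIoc t₀ τ,
        ‖A σ * pbIter A t₀ n σ‖ ≤ (d * M) ^ (n + 1) / n ! * |σ - t₀| ^ n := by
      intro σ hσ
      calc ‖A σ * pbIter A t₀ n σ‖ ≤ d * ‖A σ‖ * ‖pbIter A t₀ n σ‖ := by
            simpa using Matrix.norm_mul_le_card_mul (A σ) (pbIter A t₀ n σ)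
        _ ≤ d * M * ((d * M) ^ n * |σ - t₀| ^ n / n !) := by
            gcongr
            exacts [hM σ (hsub hσ), ih σ (hsub hσ)]
        _ = (d * M) ^ (n + 1) / n ! * |σ - t₀| ^ n := by ring
    calc ‖pbIter A t₀ (n + 1) τ‖ = ‖∫ σ in uIoc t₀ τ, A σ * pbIter A t₀ n σ‖ :=
          norm_intervalIntegral_eq _ _ _ _
      _ ≤ ∫ σ in uIoc t₀ τ, (d * M) ^ (n + 1) / n ! * |σ - t₀| ^ n :=
          norm_integral_le_of_norm_le (Continuous.integrableOn_uIoc (by fun_prop))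
            ((ae_restrict_iff' measurableSet_uIoc).2 (ae_of_all _ hpoint))
      _ = (d * M) ^ (n + 1) / n ! * (|τ - t₀| ^ (n + 1) / (n + 1)) := by
          rw [MeasureTheory.integral_const_mul, integral_pow_abs_sub_uIoc]
      _ = (d * M) ^ (n + 1) * |τ - t₀| ^ (n + 1) / (n + 1)! := by
          rw [Nat.factorial_succ]
          push_cast
          field_simp

theorem hasSum_pbIter (hA : ContinuousOn A (uIcc t₀ t)) :
    HasSum (fun n => pbIter A t₀ n t) (1 + ∫ τ in t₀..t, A τ * ∑' n, pbIter A t₀ n τ) := by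
  obtain ⟨M, hM⟩ := isCompact_uIcc.exists_bound_of_continuousOn hA
  have hM₀ : 0 ≤ M := (norm_nonneg _).trans (hM t₀ left_mem_uIcc)
  set K := d * M * |t - t₀|
  have hbound : ∀ n, ∀ τ ∈ uIcc t₀ t, ‖pbIter A t₀ n τ‖ ≤ K ^ n / n ! := fun n τ hτ =>
    (norm_pbIter_le hM n τ hτ).trans <| by
      rw [mul_pow (d * M : ℝ)]
      gcongr _ * ?_ ^ _ / _
      exact abs_sub_left_of_mem_uIcc hτ
  have hsummable : ∀ τ ∈ uIcc t₀ t, Summable fun n => pbIter A t₀ n τ := fun τ hτ =>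
    (Real.summable_pow_div_factorial K).of_norm_bounded fun n => hbound n τ hτ
  have hintegral : HasSum (fun n => ∫ τ in t₀..t, A τ * pbIter A t₀ n τ)
      (∫ τ in t₀..t, A τ * ∑' n, pbIter A t₀ n τ) := by
    refine intervalIntegral.hasSum_integral_of_dominated_convergence
      (fun n _ => d * M * (K ^ n / n !))
      (fun n => (hA.mul (continuousOn_pbIter hA n)).intervalIntegrable.def'.aestronglyMeasurable)
      (fun n => ae_of_all _ fun τ hτ => ?_)
      (ae_of_all _ fun _ _ => (Real.summable_pow_div_factorial K).mul_left _)
      intervalIntegrable_const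
      (ae_of_all _ fun τ hτ => (hsummable τ (uIoc_subset_uIcc hτ)).hasSum.mul_left (A τ))
    have hτ' : τ ∈ uIcc t₀ t := uIoc_subset_uIcc hτ
    calc ‖A τ * pbIter A t₀ n τ‖ ≤ d * ‖A τ‖ * ‖pbIter A t₀ n τ‖ := by
          simpa using Matrix.norm_mul_le_card_mul (A τ) (pbIter A t₀ n τ)
      _ ≤ d * M * (K ^ n / n !) := by
          gcongr
          exacts [hM τ hτ', hbound n τ hτ']
  exact hintegral.zero_add

end PeanoBaker

theorem stmt8_general {d : ℕ} (A : ℝ → Matrix (Fin d) (Fin d) ℝ)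
    (I : Set ℝ) (hI : I.OrdConnected) (t₀ : ℝ) (ht₀ : t₀ ∈ I)
    (hA : ContinuousOn A I) :
    (∀ t ∈ I, ∑' n : ℕ, pbIter A t₀ n t
        = 1 + ∫ τ in t₀..t, A τ * ∑' n : ℕ, pbIter A t₀ n τ) ∧
    ∑' n : ℕ, pbIter A t₀ n t₀ = 1 := by
  have volterra : ∀ t ∈ I, ∑' n : ℕ, pbIter A t₀ n t
      = 1 + ∫ τ in t₀..t, A τ * ∑' n : ℕ, pbIter A t₀ n τ := fun t ht =>
    (hasSum_pbIter (hA.mono (hI.uIcc_subset ht₀ ht))).tsum_eq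
  refine ⟨volterra, ?_⟩
  simpa using volterra t₀ ht₀

theorem stmt8 {d : ℕ} (hd : 1 ≤ d) (A : ℝ → Matrix (Fin d) (Fin d) ℝ)
    (I : Set ℝ) (hI : I.OrdConnected) (t₀ : ℝ) (ht₀ : t₀ ∈ I)
    (hA : ContinuousOn A I) :
    (∀ t ∈ I, ∑' n : ℕ, pbIter A t₀ n t
        = 1 + ∫ τ in t₀..t, A τ * ∑' n : ℕ, pbIter A t₀ n τ) ∧
    ∑' n : ℕ, pbIter A t₀ n t₀ = 1 :=
  stmt8_general A I hI t₀ ht₀ hA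
end

section
/- Let A be a continuous matrix-valued function and b a continuous vector-valued function on an interval I containing t₀, with A(t) · A(s) = A(s) · A(t) for all t, s ∈ I, and let x₀ ∈ ℝ^d. Then the function x(t) = exp(∫_{t₀}^t A(τ) dτ) · (x₀ + ∫_{t₀}^t exp(−∫_{t₀}^τ A(σ) dσ) · b(τ) dτ) is differentiable on I and satisfies x'(t) = A(t) · x(t) + b(t) for all t ∈ I, with x(t₀) = x₀. -/
/-!
With `P t = ∫_{t₀}^t A`, commutativity of the `A τ` makes all `P s` commute with each other and
with `A t`, so `exp (P s) = exp (P t) * exp (P s - P t)` and `d/dt exp (P t) = A t * exp (P t)`.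
The product rule then gives `x' = A x + exp (P t) (exp (-P t) (b t)) = A x + b`.
-/

attribute [local instance] Matrix.normedAddCommGroup Matrix.normedSpace

open Matrix MeasureTheory NormedSpace Set

theorem ContinuousOn.hasDerivWithinAt_intervalIntegral {E : Type*} [NormedAddCommGroup E]
    [NormedSpace ℝ E] [CompleteSpace E] {f : ℝ → E} {I : Set ℝ} (hI : I.OrdConnected)
    (hf : ContinuousOn f I) {a t : ℝ} (ha : a ∈ I) (ht : t ∈ I) :
    HasDerivWithinAt (fun s => ∫ τ in a..s, f τ) (f t) I t := by
  have : Filter.TendstoIxxClass Ioc (Filter.principal I) (Filter.principal I) :=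
    Filter.tendstoIxxClass_of_subset fun _ _ => Ioc_subset_Icc_self
  have : (nhdsWithin t I).IsMeasurablyGenerated :=
    hI.measurableSet.nhdsWithin_isMeasurablyGenerated t
  have : intervalIntegral.FTCFilter t (nhdsWithin t I) (nhdsWithin t I) :=
    { pure_le := pure_le_nhdsWithin ht
      le_nhds := inf_le_left }
  exact intervalIntegral.integral_hasDerivWithinAt_right
    ((hf.mono (hI.uIcc_subset ha ht)).intervalIntegrable)
    ⟨I, self_mem_nhdsWithin, hf.aestronglyMeasurable hI.measurableSet⟩ (hf t ht)

theorem ContinuousLinearEquiv.intervalIntegral_comp_comm {E F : Type*} [NormedAddCommGroup E]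
    [NormedSpace ℝ E] [NormedAddCommGroup F] [NormedSpace ℝ F] (L : E ≃L[ℝ] F) (f : ℝ → E)
    (a b : ℝ) : ∫ τ in a..b, L (f τ) = L (∫ τ in a..b, f τ) := by
  simp only [intervalIntegral, map_sub, L.integral_comp_comm]

section BanachAlgebra

variable {𝕂 𝔸 : Type*} [RCLike 𝕂] [NormedRing 𝔸] [NormedAlgebra 𝕂 𝔸] [CompleteSpace 𝔸]

-- `exp (g u) = exp (g t) * exp (g u - g t)`, and `exp` has derivative `1` at `0`.
theorem HasDerivWithinAt.exp_of_commute {g : 𝕂 → 𝔸} {g' : 𝔸} {s : Set 𝕂} {t : 𝕂}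
    (hg : HasDerivWithinAt g g' s t) (hcomm : ∀ u ∈ s, Commute (g t) (g u)) :
    HasDerivWithinAt (fun u => NormedSpace.exp (g u)) (NormedSpace.exp (g t) * g') s t := by
  let +nondep : NormedAlgebra ℚ 𝔸 := .restrictScalars ℚ 𝕂 𝔸
  have hshift : HasDerivWithinAt (fun u => NormedSpace.exp (g u - g t)) g' s t := by
    have h0 : HasFDerivAt NormedSpace.exp (1 : 𝔸 →L[𝕂] 𝔸) (g t - g t) := by
      rw [sub_self]; exact hasFDerivAt_exp_zero
    exact h0.comp_hasDerivWithinAt t (hg.sub_const (g t))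
  refine (hshift.const_mul (NormedSpace.exp (g t))).congr (fun u hu => ?_) ?_
  · rw [← exp_add_of_commute ((hcomm u hu).sub_right (Commute.refl _)), add_sub_cancel]
  · rw [sub_self, exp_zero, mul_one]

end BanachAlgebra

section RealBanachAlgebra

variable {𝔸 : Type*} [NormedRing 𝔸] [NormedAlgebra ℝ 𝔸] [CompleteSpace 𝔸]

theorem Commute.intervalIntegral_right {f : ℝ → 𝔸} {a b : ℝ} {c : 𝔸}
    (hf : IntervalIntegrable f volume a b) (h : ∀ τ ∈ uIcc a b, Commute c (f τ)) :
    Commute c (∫ τ in a..b, f τ) := by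
  have hleft : c * ∫ τ in a..b, f τ = ∫ τ in a..b, c * f τ :=
    ((ContinuousLinearMap.mul ℝ 𝔸 c).intervalIntegral_comp_comm hf).symm
  have hright : (∫ τ in a..b, f τ) * c = ∫ τ in a..b, f τ * c :=
    (((ContinuousLinearMap.mul ℝ 𝔸).flip c).intervalIntegral_comp_comm hf).symm
  rw [Commute, SemiconjBy, hleft, hright]
  exact intervalIntegral.integral_congr fun τ hτ => (h τ hτ).eq

theorem hasDerivWithinAt_exp_intervalIntegral {f : ℝ → 𝔸} {I : Set ℝ} (hI : I.OrdConnected)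
    (hf : ContinuousOn f I) (hcomm : ∀ t ∈ I, ∀ s ∈ I, Commute (f t) (f s)) {a t : ℝ}
    (ha : a ∈ I) (ht : t ∈ I) :
    HasDerivWithinAt (fun s => exp (∫ τ in a..s, f τ)) (f t * exp (∫ τ in a..t, f τ)) I t := by
  have hint : ∀ s ∈ I, IntervalIntegrable f volume a s := fun s hs =>
    (hf.mono (hI.uIcc_subset ha hs)).intervalIntegrable
  have hfP : ∀ u ∈ I, ∀ s ∈ I, Commute (f u) (∫ τ in a..s, f τ) := fun u hu s hs =>
    .intervalIntegral_right (hint s hs) fun τ hτ => hcomm u hu τ (hI.uIcc_subset ha hs hτ)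
  have hPP : ∀ s ∈ I, Commute (∫ τ in a..t, f τ) (∫ τ in a..s, f τ) := fun s hs =>
    .intervalIntegral_right (hint s hs) fun τ hτ =>
      (hfP τ (hI.uIcc_subset ha hs hτ) t ht).symm
  rw [(hfP t ht t ht).exp_right.eq]
  exact (hf.hasDerivWithinAt_intervalIntegral hI ha ht).exp_of_commute hPP

end RealBanachAlgebra

section VariationOfConstants

variable {E : Type*} [NormedAddCommGroup E] [NormedSpace ℝ E] [CompleteSpace E]

noncomputable def variationOfConstants (A : ℝ → E →L[ℝ] E) (b : ℝ → E) (t₀ : ℝ) (x₀ : E)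
    (t : ℝ) : E :=
  exp (∫ τ in t₀..t, A τ) (x₀ + ∫ τ in t₀..t, exp (-∫ σ in t₀..τ, A σ) (b τ))

theorem hasDerivWithinAt_variationOfConstants {A : ℝ → E →L[ℝ] E} {b : ℝ → E} {I : Set ℝ}
    (hI : I.OrdConnected) (hA : ContinuousOn A I) (hb : ContinuousOn b I)
    (hcomm : ∀ t ∈ I, ∀ s ∈ I, Commute (A t) (A s)) {t₀ t : ℝ} (ht₀ : t₀ ∈ I) (ht : t ∈ I)
    (x₀ : E) :
    HasDerivWithinAt (variationOfConstants A b t₀ x₀)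
      (A t (variationOfConstants A b t₀ x₀ t) + b t) I t := by
  let +nondep : NormedAlgebra ℚ (E →L[ℝ] E) := .restrictScalars ℚ ℝ _
  set P : ℝ → E →L[ℝ] E := fun s => ∫ τ in t₀..s, A τ
  have hP : ContinuousOn P I := fun s hs =>
    (hA.hasDerivWithinAt_intervalIntegral hI ht₀ hs).continuousWithinAt
  have hg : ContinuousOn (fun τ => exp (-P τ) (b τ)) I :=
    (exp_continuous.comp_continuousOn hP.neg).clm_apply hb
  have hexp := hasDerivWithinAt_exp_intervalIntegral hI hA hcomm ht₀ ht
  have hw := (hg.hasDerivWithinAt_intervalIntegral hI ht₀ ht).const_add x₀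
  refine (hexp.clm_apply hw).congr_deriv ?_
  rw [mul_apply_eq_comp, ← mul_apply_eq_comp (exp (P t)),
    ← exp_add_of_commute (Commute.refl (P t)).neg_right, add_neg_cancel, exp_zero,
    one_apply_eq_self]
  rfl

end VariationOfConstants

namespace Matrix

variable {n : Type*} [Fintype n] [DecidableEq n]

-- The sup norm on matrices is not submultiplicative, so the exponential is differentiated after
-- transport to the Banach algebra of continuous linear maps.
noncomputable def toCLM' : Matrix n n ℝ ≃ₐ[ℝ] ((n → ℝ) →L[ℝ] (n → ℝ)) :=
  toLinAlgEquiv'.trans (Module.End.toContinuousLinearMap (n → ℝ))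

@[simp]
theorem toCLM'_apply (M : Matrix n n ℝ) (v : n → ℝ) : toCLM' M v = M *ᵥ v := rfl

theorem continuous_toCLM' : Continuous (toCLM' : Matrix n n ℝ → (n → ℝ) →L[ℝ] (n → ℝ)) :=
  LinearMap.continuous_of_finiteDimensional toCLM'.toLinearMap

theorem toCLM'_intervalIntegral (A : ℝ → Matrix n n ℝ) (a b : ℝ) :
    toCLM' (∫ τ in a..b, A τ) = ∫ τ in a..b, toCLM' (A τ) :=
  ((LinearEquiv.toContinuousLinearEquiv toCLM'.toLinearEquiv).intervalIntegral_comp_comm A a b).symm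

theorem toCLM'_exp (M : Matrix n n ℝ) : toCLM' (exp M) = exp (toCLM' M) := by
  let L : Matrix n n ℝ ≃L[ℝ] _ := LinearEquiv.toContinuousLinearEquiv toCLM'.toLinearEquiv
  have hL : ∀ M, toCLM' M = L M := fun _ => rfl
  rw [exp_eq_tsum ℝ, exp_eq_tsum ℝ, hL, L.map_tsum]
  simp only [map_smul, ← hL, map_pow]

end Matrix

theorem stmt16_general {d : ℕ} (A : ℝ → Matrix (Fin d) (Fin d) ℝ)
    (b : ℝ → Fin d → ℝ) (I : Set ℝ) (hI : I.OrdConnected) (t₀ : ℝ) (ht₀ : t₀ ∈ I)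
    (hA : ContinuousOn A I) (hb : ContinuousOn b I)
    (hcomm : ∀ t ∈ I, ∀ s ∈ I, A t * A s = A s * A t) (x₀ : Fin d → ℝ)
    (x : ℝ → Fin d → ℝ)
    (hx : ∀ t, x t = NormedSpace.exp (∫ τ in t₀..t, A τ) *ᵥ
        (x₀ + ∫ τ in t₀..t, NormedSpace.exp (-∫ σ in t₀..τ, A σ) *ᵥ b τ)) :
    (∀ t ∈ I, HasDerivWithinAt x (A t *ᵥ x t + b t) I t) ∧ x t₀ = x₀ := by
  have hx' : x = variationOfConstants (fun τ => toCLM' (A τ)) b t₀ x₀ := by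
    funext t
    simp only [hx, variationOfConstants, ← toCLM'_intervalIntegral, ← map_neg, ← toCLM'_exp,
      toCLM'_apply]
  refine ⟨fun t ht => ?_, by simp [hx]⟩
  have := hasDerivWithinAt_variationOfConstants (A := fun τ => toCLM' (A τ)) hI
    (continuous_toCLM'.comp_continuousOn hA) hb
    (fun t ht s hs => Commute.map (hcomm t ht s hs) toCLM') ht₀ ht x₀
  rwa [← hx', toCLM'_apply] at this

theorem stmt16 {d : ℕ} (hd : 1 ≤ d) (A : ℝ → Matrix (Fin d) (Fin d) ℝ)
    (b : ℝ → Fin d → ℝ) (I : Set ℝ) (hI : I.OrdConnected) (t₀ : ℝ) (ht₀ : t₀ ∈ I)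
    (hA : ContinuousOn A I) (hb : ContinuousOn b I)
    (hcomm : ∀ t ∈ I, ∀ s ∈ I, A t * A s = A s * A t) (x₀ : Fin d → ℝ)
    (x : ℝ → Fin d → ℝ)
    (hx : ∀ t, x t = NormedSpace.exp (∫ τ in t₀..t, A τ) *ᵥ
        (x₀ + ∫ τ in t₀..t, NormedSpace.exp (-∫ σ in t₀..τ, A σ) *ᵥ b τ)) :
    (∀ t ∈ I, HasDerivWithinAt x (A t *ᵥ x t + b t) I t) ∧ x t₀ = x₀ :=
  stmt16_general A b I hI t₀ ht₀ hA hb hcomm x₀ x hx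
end
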